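/- For every n ≥ 1, the sum over all permutations σ of {1,...,n} avoiding both 312 and 123 of L(σ)² equals (n²-n+2)·(2(2n²-2n+1))/(n²-n+2), i.e. equals 2(2n²-2n+1); equivalently the expectation of L² on S_n(312,123) is 2(2n²-2n+1)/(n²-n+2). -/

import Mathlib

abbrev Avoids312 {n : ℕ} (σ : Equiv.Perm (Fin n)) : Prop :=
  ¬ ∃ i j k : Fin n, i < j ∧ j < k ∧ σ j < σ k ∧ σ k < σ i

abbrev Avoids21 {n : ℕ} (σ : Equiv.Perm (Fin n)) : Prop :=
  ¬ ∃ i j : Fin n, i < j ∧ σ j < σ i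

abbrev Avoids123 {n : ℕ} (σ : Equiv.Perm (Fin n)) : Prop :=
  ¬ ∃ i j k : Fin n, i < j ∧ j < k ∧ σ i < σ j ∧ σ j < σ k

abbrev Avoids132 {n : ℕ} (σ : Equiv.Perm (Fin n)) : Prop :=
  ¬ ∃ i j k : Fin n, i < j ∧ j < k ∧ σ i < σ k ∧ σ k < σ j

abbrev Avoids213 {n : ℕ} (σ : Equiv.Perm (Fin n)) : Prop :=
  ¬ ∃ i j k : Fin n, i < j ∧ j < k ∧ σ j < σ i ∧ σ i < σ k

abbrev Avoids231 {n : ℕ} (σ : Equiv.Perm (Fin n)) : Prop :=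
  ¬ ∃ i j k : Fin n, i < j ∧ j < k ∧ σ k < σ i ∧ σ i < σ j

abbrev Avoids321 {n : ℕ} (σ : Equiv.Perm (Fin n)) : Prop :=
  ¬ ∃ i j k : Fin n, i < j ∧ j < k ∧ σ k < σ j ∧ σ j < σ i

abbrev Avoids1234 {n : ℕ} (σ : Equiv.Perm (Fin n)) : Prop :=
  ¬ ∃ i j k l : Fin n, i < j ∧ j < k ∧ k < l ∧ σ i < σ j ∧ σ j < σ k ∧ σ k < σ l

abbrev Avoids1243 {n : ℕ} (σ : Equiv.Perm (Fin n)) : Prop :=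
  ¬ ∃ i j k l : Fin n, i < j ∧ j < k ∧ k < l ∧ σ i < σ j ∧ σ j < σ l ∧ σ l < σ k

abbrev AvoidsIncr {n : ℕ} (m : ℕ) (σ : Equiv.Perm (Fin n)) : Prop :=
  ¬ ∃ f : Fin m → Fin n,
      (∀ i j : Fin m, i < j → f i < f j) ∧ (∀ i j : Fin m, i < j → σ (f i) < σ (f j))

/-- Length of the longest increasing subsequence of a permutation of `{1,…,n}`. -/
def lis {n : ℕ} (σ : Equiv.Perm (Fin n)) : ℕ :=
  Nat.findGreatest (fun k => ∃ f : Fin k → Fin n,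
    (∀ i j : Fin k, i < j → f i < f j) ∧ (∀ i j : Fin k, i < j → σ (f i) < σ (f j))) n

/-!
A permutation avoiding `123` has `L ≤ 2`, with `L = 1` only for the decreasing one. If `σ` also
avoids `312`, the entries before the maximum decrease (else `123` ends at the maximum) without
gaps (a skipped value would lie further right and form a `312`), and the entries from the maximum
on decrease (else `312` starts at the maximum). So `σ` is determined by the interval `[x, y)` of
values before the maximum, and every nonempty interval of values below the maximum occurs. Hence
`S_n(312,123)` consists of the decreasing permutation and `C(n, 2)` permutations with `L = 2`.
-/

open Finset

section Lis

variable {n : ℕ} {σ : Equiv.Perm (Fin n)}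

theorem exists_strictMono_lis :
    ∃ f : Fin (lis σ) → Fin n, StrictMono f ∧ StrictMono (σ ∘ f) :=
  Nat.findGreatest_spec
    (P := fun k => ∃ f : Fin k → Fin n, StrictMono f ∧ StrictMono (σ ∘ f)) (Nat.zero_le n) ⟨Fin.elim0, fun i => i.elim0, fun i => i.elim0⟩

theorem le_lis {k : ℕ} (hk : k ≤ n) {f : Fin k → Fin n} (hf : StrictMono f)
    (hσf : StrictMono (σ ∘ f)) : k ≤ lis σ :=
  Nat.le_findGreatest hk ⟨f, hf, hσf⟩

theorem lis_lt_of_avoidsIncr {m : ℕ} (h : AvoidsIncr m σ) : lis σ < m := by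
  by_contra! hm
  obtain ⟨f, hf, hσf⟩ := exists_strictMono_lis (σ := σ)
  exact h ⟨f ∘ Fin.castLE hm, fun _ _ hij => hf hij, fun _ _ hij => hσf hij⟩

theorem one_le_lis [NeZero n] : 1 ≤ lis σ :=
  le_lis NeZero.one_le (f := fun _ => 0) (Subsingleton.strictMono _) (Subsingleton.strictMono _)

theorem two_le_lis {i j : Fin n} (hij : i < j) (hσ : σ i < σ j) : 2 ≤ lis σ := by
  refine le_lis (by omega) (f := ![i, j]) ?_ ?_ <;>
    · refine Fin.strictMono_iff_lt_succ.2 fun k => ?_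
      fin_cases k
      simpa

theorem avoidsIncr_three_of_avoids123 (h : Avoids123 σ) : AvoidsIncr 3 σ :=
  fun ⟨f, hf, hσf⟩ => h ⟨f 0, f 1, f 2, hf _ _ (by decide), hf _ _ (by decide),
    hσf _ _ (by decide), hσf _ _ (by decide)⟩

theorem avoidsIncr_two_of_strictAnti (h : StrictAnti σ) : AvoidsIncr 2 σ :=
  fun ⟨f, hf, hσf⟩ => (hσf 0 1 (by decide)).not_gt (h (hf 0 1 (by decide)))

end Lis

def avoiding312And123 (n : ℕ) : Finset (Equiv.Perm (Fin n)) :=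
  {σ | Avoids312 σ ∧ Avoids123 σ}

theorem mem_avoiding312And123 {n : ℕ} {σ : Equiv.Perm (Fin n)} :
    σ ∈ avoiding312And123 n ↔ Avoids312 σ ∧ Avoids123 σ := by
  simp [avoiding312And123]

section Structure

variable {n : ℕ} {σ : Equiv.Perm (Fin (n + 1))}

def posMax (σ : Equiv.Perm (Fin (n + 1))) : Fin (n + 1) := σ.symm (Fin.last n)

@[simp] theorem apply_posMax : σ (posMax σ) = Fin.last n := σ.apply_symm_apply _

theorem apply_lt_last {i : Fin (n + 1)} (hi : i ≠ posMax σ) : σ i < Fin.last n :=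
  Fin.lt_last_iff_ne_last.2 fun h => hi (σ.eq_symm_apply.2 h)

theorem apply_lt_apply_of_lt_posMax (h123 : Avoids123 σ) {i j : Fin (n + 1)} (hij : i < j)
    (hj : j < posMax σ) : σ j < σ i := by
  by_contra! h
  exact h123 ⟨i, j, posMax σ, hij, hj, h.lt_of_ne (σ.injective.ne hij.ne),
    by simpa using apply_lt_last hj.ne⟩

theorem apply_lt_apply_of_posMax_le (h312 : Avoids312 σ) {i j : Fin (n + 1)}
    (hi : posMax σ ≤ i) (hij : i < j) : σ j < σ i := by
  rcases hi.eq_or_lt with rfl | hi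
  · simpa using apply_lt_last (hi.trans_lt hij).ne'
  · by_contra! h
    exact h312 ⟨posMax σ, i, j, hi, hij, h.lt_of_ne (σ.injective.ne hij.ne),
      by simpa using apply_lt_last (hi.trans hij).ne'⟩

theorem apply_castSucc_eq_apply_succ_add_one (h312 : Avoids312 σ) (h123 : Avoids123 σ)
    {k : Fin n} (hk : k.succ < posMax σ) : (σ k.castSucc : ℕ) = σ k.succ + 1 := by
  have hdesc := apply_lt_apply_of_lt_posMax h123 k.castSucc_lt_succ hk
  by_contra hgap
  set v : Fin (n + 1) := ⟨σ k.succ + 1, by omega⟩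
  have hv₁ : σ k.succ < v := Fin.lt_def.2 (Nat.lt_succ_self _)
  have hv₂ : v < σ k.castSucc := Fin.lt_def.2 (by dsimp [v]; omega)
  rcases lt_trichotomy (σ.symm v) k.castSucc with hq | hq | hq
  · have := apply_lt_apply_of_lt_posMax h123 hq (k.castSucc_lt_succ.trans hk)
    simp only [Equiv.apply_symm_apply] at this
    exact this.not_gt hv₂
  · exact hv₂.ne (by rw [← hq, Equiv.apply_symm_apply])
  · rcases (Fin.castSucc_lt_iff_succ_le.1 hq).eq_or_lt with hq' | hq'
    · exact hv₁.ne (by rw [hq', Equiv.apply_symm_apply])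
    · exact h312 ⟨k.castSucc, k.succ, σ.symm v, k.castSucc_lt_succ, hq',
        by simpa using hv₁, by simpa using hv₂⟩

theorem posMax_le_apply_zero_add_one (h123 : Avoids123 σ) :
    (posMax σ : ℕ) ≤ σ 0 + 1 := by
  have hmaps : ∀ i ∈ Iio (posMax σ), σ i ∈ Iic (σ 0) := fun i hi => by
    rcases (Fin.zero_le i).eq_or_lt with rfl | hi₀
    · exact mem_Iic.2 le_rfl
    · exact mem_Iic.2 (apply_lt_apply_of_lt_posMax h123 hi₀ (mem_Iio.1 hi)).le
  simpa using card_le_card_of_injOn σ hmaps σ.injective.injOn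

theorem Equiv.Perm.not_lt_of_eqOn_Iio {α : Type*} [LinearOrder α] {σ τ : Equiv.Perm α}
    {m i : α} (hσ : StrictAntiOn σ (Set.Ici m)) (hmi : m ≤ i) (heq : ∀ k < i, σ k = τ k) :
    ¬ σ i < τ i := by
  intro hlt
  rcases lt_trichotomy (σ.symm (τ i)) i with hk | hk | hk
  · have := heq _ hk
    rw [Equiv.apply_symm_apply] at this
    exact hk.ne (τ.injective this.symm)
  · exact hlt.ne (σ.symm_apply_eq.1 hk).symm
  · have := hσ (Set.mem_Ici.2 hmi) (Set.mem_Ici.2 (hmi.trans hk.le)) hk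
    rw [Equiv.apply_symm_apply] at this
    exact this.not_gt hlt

theorem strictAntiOn_Ici_posMax (h312 : Avoids312 σ) : StrictAntiOn σ (Set.Ici (posMax σ)) :=
  fun _ hi _ _ hij => apply_lt_apply_of_posMax_le h312 hi hij

theorem eq_of_posMax_eq_of_apply_zero_eq {τ : Equiv.Perm (Fin (n + 1))}
    (hσ : σ ∈ avoiding312And123 (n + 1)) (hτ : τ ∈ avoiding312And123 (n + 1))
    (hm : posMax σ = posMax τ) (h0 : σ 0 = τ 0) : σ = τ := by
  rw [mem_avoiding312And123] at hσ hτ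
  suffices h : ∀ i, (∀ k < i, σ k = τ k) → σ i = τ i from
    Equiv.ext fun i => WellFoundedLT.induction i h
  intro i ih
  rcases lt_trichotomy i (posMax σ) with hi | rfl | hi
  · cases i using Fin.cases with
    | zero => exact h0
    | succ k =>
      have hσk := apply_castSucc_eq_apply_succ_add_one hσ.1 hσ.2 hi
      have hτk := apply_castSucc_eq_apply_succ_add_one hτ.1 hτ.2 (hm ▸ hi)
      have := ih _ k.castSucc_lt_succ
      exact Fin.ext (by rw [this] at hσk; omega)
  · rw [apply_posMax, hm, apply_posMax]
  · exact le_antisymm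
      (not_lt.1 (Equiv.Perm.not_lt_of_eqOn_Iio (strictAntiOn_Ici_posMax hτ.1) (hm ▸ hi.le)
        fun k hk => (ih k hk).symm))
      (not_lt.1 (Equiv.Perm.not_lt_of_eqOn_Iio (strictAntiOn_Ici_posMax hσ.1) hi.le ih))

theorem lis_eq_of_mem_avoiding (hσ : σ ∈ avoiding312And123 (n + 1)) :
    lis σ = if posMax σ = 0 then 1 else 2 := by
  rw [mem_avoiding312And123] at hσ
  split_ifs with h
  · have hanti : StrictAnti σ := fun i j hij =>
      apply_lt_apply_of_posMax_le hσ.1 (h ▸ Fin.zero_le i) hij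
    have := lis_lt_of_avoidsIncr (avoidsIncr_two_of_strictAnti hanti)
    have := one_le_lis (σ := σ)
    omega
  · obtain ⟨k, hk⟩ := Fin.exists_succ_eq.2 h
    have hasc : σ k.castSucc < σ k.succ := by
      simpa [hk] using apply_lt_last (k.castSucc_lt_succ.trans_eq hk).ne
    have := two_le_lis k.castSucc_lt_succ hasc
    have := lis_lt_of_avoidsIncr (avoidsIncr_three_of_avoids123 hσ.2)
    omega

end Structure

section Blocks

variable {n : ℕ}

/-- The sequence `(y - 1, y - 2, …, x, n, n - 1, …, y, x - 1, …, 0)`. -/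
def blockFun (n x y i : ℕ) : ℕ :=
  if i < y - x then y - 1 - i else if i ≤ n - x then n + y - x - i else n - i

theorem exists_perm_val_eq_blockFun {x y : ℕ} (hxy : x ≤ y) (hy : y ≤ n + 1) :
    ∃ σ : Equiv.Perm (Fin (n + 1)), ∀ i, (σ i : ℕ) = blockFun n x y i := by
  have hlt (i : Fin (n + 1)) : blockFun n x y i < n + 1 := by
    have := i.isLt
    unfold blockFun
    split_ifs <;> omega
  let f (i : Fin (n + 1)) : Fin (n + 1) := ⟨blockFun n x y i, hlt i⟩
  have hf : Function.Injective f := by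
    intro i j hij
    have := i.isLt
    have := j.isLt
    simp only [f, Fin.mk.injEq, blockFun] at hij
    ext
    split_ifs at hij <;> omega
  exact ⟨Equiv.ofBijective f (Finite.injective_iff_bijective.1 hf), fun _ => rfl⟩

theorem mem_avoiding_of_val_eq_blockFun {x y : ℕ} (hxy : x ≤ y)
    {σ : Equiv.Perm (Fin (n + 1))} (hσ : ∀ i, (σ i : ℕ) = blockFun n x y i) :
    σ ∈ avoiding312And123 (n + 1) := by
  rw [mem_avoiding312And123]
  constructor <;>
  · rintro ⟨i, j, k, hij, hjk, h₁, h₂⟩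
    have := k.isLt
    simp only [Fin.lt_def, hσ, blockFun] at hij hjk h₁ h₂
    split_ifs at h₁ h₂ <;> omega

/-- The values before the maximum form the interval `[x, y)`; the decreasing permutation, where
this interval is empty, is sent to `(n + 1, n + 1)`. -/
def blockBounds (σ : Equiv.Perm (Fin (n + 1))) : ℕ × ℕ :=
  ((σ 0 : ℕ) + 1 - posMax σ, (σ 0 : ℕ) + 1)

def blockBoundsSet (n : ℕ) : Finset (ℕ × ℕ) :=
  insert (n + 1, n + 1) {p ∈ range (n + 1) ×ˢ range (n + 1) | p.1 < p.2}

theorem mem_blockBoundsSet {x y : ℕ} :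
    (x, y) ∈ blockBoundsSet n ↔ x = n + 1 ∧ y = n + 1 ∨ x < y ∧ y ≤ n := by
  simp only [blockBoundsSet, mem_insert, Prod.mk.injEq, mem_filter, mem_product, mem_range]
  omega

theorem blockBounds_of_val_eq_blockFun {x y : ℕ} (hp : (x, y) ∈ blockBoundsSet n)
    {σ : Equiv.Perm (Fin (n + 1))} (hσ : ∀ i, (σ i : ℕ) = blockFun n x y i) :
    blockBounds σ = (x, y) := by
  rw [mem_blockBoundsSet] at hp
  have hmax : σ ⟨y - x, by omega⟩ = Fin.last n := by
    ext
    rw [hσ, Fin.val_last, Fin.val_mk, blockFun]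
    split_ifs <;> omega
  have h0 := hσ 0
  rw [Fin.val_zero, blockFun] at h0
  simp only [blockBounds, posMax, σ.symm_apply_eq.2 hmax.symm, Prod.mk.injEq]
  split_ifs at h0 <;> omega

theorem bijOn_blockBounds :
    Set.BijOn blockBounds (avoiding312And123 (n + 1) : Set (Equiv.Perm (Fin (n + 1))))
      (blockBoundsSet n) := by
  refine ⟨fun σ _ => ?_, fun σ hσ τ hτ hστ => ?_, fun ⟨x, y⟩ hp => ?_⟩
  · rw [blockBounds, mem_coe, mem_blockBoundsSet]
    by_cases h : posMax σ = 0
    · have h0 : σ 0 = Fin.last n := h ▸ apply_posMax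
      simp [h, h0]
    · have := Fin.lt_def.1 (apply_lt_last (Ne.symm h))
      have := Fin.pos_iff_ne_zero.2 h
      rw [Fin.val_last] at *
      omega
  · have hσ' := posMax_le_apply_zero_add_one (mem_avoiding312And123.1 hσ).2
    have hτ' := posMax_le_apply_zero_add_one (mem_avoiding312And123.1 hτ).2
    simp only [blockBounds, Prod.mk.injEq] at hστ
    have h0 : σ 0 = τ 0 := Fin.ext (by omega)
    exact eq_of_posMax_eq_of_apply_zero_eq hσ hτ (Fin.ext (by omega)) h0
  · have hxy := mem_blockBoundsSet.1 hp
    obtain ⟨σ, hσ⟩ := exists_perm_val_eq_blockFun (n := n) (x := x) (y := y) (by omega)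
      (by omega)
    exact ⟨σ, mem_avoiding_of_val_eq_blockFun (by omega) hσ,
      blockBounds_of_val_eq_blockFun hp hσ⟩

theorem blockBounds_fst_lt_snd_iff {σ : Equiv.Perm (Fin (n + 1))} :
    (blockBounds σ).1 < (blockBounds σ).2 ↔ posMax σ ≠ 0 := by
  rw [blockBounds, ← Fin.pos_iff_ne_zero, Fin.lt_def, Fin.val_zero]
  omega

theorem card_blockBoundsSet : #(blockBoundsSet n) = (n + 1).choose 2 + 1 := by
  rw [blockBoundsSet, card_insert_of_notMem (by simp), card_product_filter_lt, card_range]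

theorem sum_blockBoundsSet_ite :
    ∑ p ∈ blockBoundsSet n, (if p.1 < p.2 then 4 else 1) = 4 * (n + 1).choose 2 + 1 := by
  rw [blockBoundsSet, sum_insert (by simp), sum_ite_of_true fun p hp => (mem_filter.1 hp).2,
    sum_const, card_product_filter_lt, card_range, smul_eq_mul, if_neg (lt_irrefl _)]
  ring

theorem card_avoiding312And123 : #(avoiding312And123 (n + 1)) = (n + 1).choose 2 + 1 := by
  rw [card_nbij _ bijOn_blockBounds.mapsTo bijOn_blockBounds.injOn bijOn_blockBounds.surjOn,
    card_blockBoundsSet]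

theorem sum_lis_sq_avoiding312And123 :
    ∑ σ ∈ avoiding312And123 (n + 1), lis σ ^ 2 = 4 * (n + 1).choose 2 + 1 := by
  rw [← sum_blockBoundsSet_ite]
  refine sum_nbij _ (fun σ hσ => bijOn_blockBounds.mapsTo hσ) bijOn_blockBounds.injOn
    bijOn_blockBounds.surjOn fun σ hσ => ?_
  by_cases h : posMax σ = 0 <;> simp [lis_eq_of_mem_avoiding hσ, blockBounds_fst_lt_snd_iff, h]

/-- the expectation of `L²` on `S_n(312,123)` equals `2(2n²-2n+1)/(n²-n+2)`. -/
theorem stmt_5 (n : ℕ) (hn : 1 ≤ n) :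
    (∑ σ ∈ Finset.univ.filter (fun σ : Equiv.Perm (Fin n) => Avoids312 σ ∧ Avoids123 σ),
        (lis σ : ℚ) ^ 2) /
      ((Finset.univ.filter (fun σ : Equiv.Perm (Fin n) => Avoids312 σ ∧ Avoids123 σ)).card : ℚ)
      = 2 * (2 * (n : ℚ) ^ 2 - 2 * n + 1) / ((n : ℚ) ^ 2 - n + 2) := by
  obtain ⟨n, rfl⟩ : ∃ k, n = k + 1 := ⟨n - 1, by omega⟩
  have hsum := congrArg (Nat.cast : ℕ → ℚ) (sum_lis_sq_avoiding312And123 (n := n))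
  have hcard := congrArg (Nat.cast : ℕ → ℚ) (card_avoiding312And123 (n := n))
  push_cast [avoiding312And123, Nat.cast_choose_two] at hsum hcard
  rw [hsum, hcard]
  push_cast
  field_simp
  ring
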